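/- arXiv:1807.01231 — 6 statements merged into one kernel-verified Lean document; each statement's English description precedes it below -/
import Mathlib

section
/- Let A be a reduced commutative ring and M a finitely generated A-module. If f = 0 is the only element f of A such that the localized module M[f⁻¹] is a finite free A[f⁻¹]-module, then 1 = 0 in A (i.e., A is the trivial ring). -/
/-!
Choose `f ≠ 0` and `v₁, …, vₙ ∈ M` whose images generate `M[f⁻¹]`, with `n` as small as possible
(`f = 1` and generators of `M` show that such data exist). If the `vᵢ` satisfy a relation
`∑ cᵢ vᵢ = 0` in `M` with some `cⱼ` nonzero in `A[f⁻¹]`, then `f cⱼ ≠ 0` and the `vᵢ` with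
`i ≠ j` already generate `M[(f cⱼ)⁻¹]`, contradicting minimality. Hence the images of the `vᵢ`
form a basis of `M[f⁻¹]`.
-/

open Submodule

section

variable {A M : Type*} [CommRing A] [AddCommGroup M] [Module A M]

section Localization

variable (S : Submonoid A)

lemma span_image_mkLinearMap_eq_top {s : Set M} (h : ∀ x : M, ∃ r ∈ S, r • x ∈ span A s) :
    span (Localization S) (LocalizedModule.mkLinearMap S M '' s) = ⊤ := by
  rw [← localized'_span (Localization S) S, eq_top_iff]
  rintro x -
  obtain ⟨⟨z, t⟩, rfl⟩ := IsLocalizedModule.mk'_surjective S (LocalizedModule.mkLinearMap S M) x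
  obtain ⟨r, hr, hz⟩ := h z
  rw [mem_localized']
  exact ⟨r • z, hz, ⟨r, hr⟩ * t, IsLocalizedModule.mk'_cancel_left _ _ _ _⟩

lemma linearIndependent_mkLinearMap_comp {ι : Type*} [Fintype ι] {v : ι → M}
    (h : ∀ c : ι → A, ∑ i, c i • v i = 0 → ∀ i, algebraMap A (Localization S) (c i) = 0) :
    LinearIndependent (Localization S) (LocalizedModule.mkLinearMap S M ∘ v) := by
  rw [Fintype.linearIndependent_iff]
  intro g hg i
  obtain ⟨b, hb⟩ := IsLocalization.exist_integer_multiples S Finset.univ g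
  choose c hc using fun i => hb i (Finset.mem_univ i)
  have hcv : LocalizedModule.mkLinearMap S M (∑ i, c i • v i) = 0 := by
    simp only [map_sum, map_smul, ← algebraMap_smul (Localization S) (c _), hc, smul_assoc,
      ← Finset.smul_sum, Function.comp_apply] at hg ⊢
    rw [hg, smul_zero]
  obtain ⟨r, hr⟩ := (IsLocalizedModule.eq_zero_iff S _).mp hcv
  have hrc := h (fun i => r * c i)
    (by simpa [Finset.smul_sum, mul_smul, Submonoid.smul_def] using hr) i
  rw [map_mul, (IsLocalization.map_units _ r).mul_right_eq_zero, hc i, Algebra.smul_def,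
    (IsLocalization.map_units _ b).mul_right_eq_zero] at hrc
  exact hrc

lemma free_localizedModule_of_relations_vanish {ι : Type*} [Fintype ι] {v : ι → M}
    (hspan : ∀ x : M, ∃ r ∈ S, r • x ∈ span A (Set.range v))
    (hind : ∀ c : ι → A, ∑ i, c i • v i = 0 → ∀ i, algebraMap A (Localization S) (c i) = 0) :
    Module.Free (Localization S) (LocalizedModule S M) :=
  .of_basis <| Module.Basis.mk (linearIndependent_mkLinearMap_comp S hind) <| by
    rw [Set.range_comp, span_image_mkLinearMap_eq_top S hspan]

end Localization

/-- `N[f⁻¹] = M[f⁻¹]`, phrased inside `M`. -/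
def Submodule.IsTopAway (f : A) (N : Submodule A M) : Prop :=
  ∀ x : M, ∃ k : ℕ, f ^ k • x ∈ N

lemma Submodule.IsTopAway.exists_mem_powers {f : A} {N : Submodule A M} (hN : N.IsTopAway f)
    (x : M) : ∃ r ∈ Submonoid.powers f, r • x ∈ N :=
  let ⟨k, hk⟩ := hN x
  ⟨f ^ k, pow_mem (Submonoid.mem_powers f) k, hk⟩

lemma Submodule.IsTopAway.mul {f g : A} {N N' : Submodule A M} (hN : N.IsTopAway f)
    (hg : ∀ y ∈ N, g • y ∈ N') : N'.IsTopAway (f * g) := by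
  intro x
  obtain ⟨k, hk⟩ := hN x
  refine ⟨k + 1, ?_⟩
  have hfg : (f * g) ^ (k + 1) • x = (f * g ^ k) • g • f ^ k • x := by
    simp only [smul_smul]
    ring_nf
  rw [hfg]
  exact N'.smul_mem _ (hg _ hk)

lemma smul_mem_span_range_succAbove {n : ℕ} {v : Fin (n + 1) → M} {c : Fin (n + 1) → A}
    (hc : ∑ i, c i • v i = 0) (j : Fin (n + 1)) :
    ∀ y ∈ span A (Set.range v), c j • y ∈ span A (Set.range (v ∘ j.succAbove)) := by
  have hvj : c j • v j = -∑ k, c (j.succAbove k) • v (j.succAbove k) :=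
    eq_neg_of_add_eq_zero_left (by rwa [← Fin.sum_univ_succAbove (fun i => c i • v i) j])
  suffices span A (Set.range v) ≤
      (span A (Set.range (v ∘ j.succAbove))).comap (LinearMap.lsmul A M (c j)) from
    fun y hy => this hy
  rw [span_le]
  rintro _ ⟨i, rfl⟩
  simp only [SetLike.mem_coe, mem_comap, LinearMap.lsmul_apply]
  rcases Fin.eq_self_or_eq_succAbove j i with rfl | ⟨k, rfl⟩
  · rw [hvj]
    exact neg_mem (sum_mem fun k _ => smul_mem _ _ (subset_span ⟨k, rfl⟩))
  · exact smul_mem _ _ (subset_span ⟨k, rfl⟩)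

theorem exists_ne_zero_free_localizedModule_powers {n : ℕ} {f : A} (hf : f ≠ 0)
    {v : Fin n → M} (hv : (span A (Set.range v)).IsTopAway f) :
    ∃ g : A, g ≠ 0 ∧
      Module.Free (Localization.Away g) (LocalizedModule (Submonoid.powers g) M) := by
  induction n generalizing f with
  | zero =>
    exact ⟨f, hf, free_localizedModule_of_relations_vanish _ hv.exists_mem_powers
      fun _ _ i => i.elim0⟩
  | succ n ih =>
    by_cases hind : ∀ c : Fin (n + 1) → A, ∑ i, c i • v i = 0 →
        ∀ i, algebraMap A (Localization.Away f) (c i) = 0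
    · exact ⟨f, hf, free_localizedModule_of_relations_vanish _ hv.exists_mem_powers hind⟩
    push Not at hind
    obtain ⟨c, hc, j, hcj⟩ := hind
    have hfcj : f * c j ≠ 0 := fun h0 =>
      hcj ((IsLocalization.map_eq_zero_iff (Submonoid.powers f) _ _).mpr ⟨⟨f, 1, pow_one f⟩, h0⟩)
    exact ih hfcj (hv.mul (smul_mem_span_range_succAbove hc j))

end

theorem generic_freeness_fg_general (A : Type*) [CommRing A]
    (M : Type*) [AddCommGroup M] [Module A M] [Module.Finite A M]
    (h : ∀ f : A,
      Module.Finite (Localization.Away f) (LocalizedModule (Submonoid.powers f) M) →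
      Module.Free (Localization.Away f) (LocalizedModule (Submonoid.powers f) M) →
      f = 0) :
    (1 : A) = 0 := by
  by_contra h1
  obtain ⟨n, v, hv⟩ := Module.Finite.exists_fin (R := A) (M := M)
  obtain ⟨g, hg, hfree⟩ :=
    exists_ne_zero_free_localizedModule_powers h1 (v := v) fun x => ⟨0, by simp [hv]⟩
  exact hg (h g (.of_isLocalizedModule (Submonoid.powers g)
    (LocalizedModule.mkLinearMap (Submonoid.powers g) M)) hfree)

theorem generic_freeness_fg (A : Type*) [CommRing A] [IsReduced A]
    (M : Type*) [AddCommGroup M] [Module A M] [Module.Finite A M]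
    (h : ∀ f : A,
      Module.Finite (Localization.Away f) (LocalizedModule (Submonoid.powers f) M) →
      Module.Free (Localization.Away f) (LocalizedModule (Submonoid.powers f) M) →
      f = 0) :
    (1 : A) = 0 :=
  generic_freeness_fg_general A M h
end

section
/- Let A be a reduced commutative ring. If h ∈ A is such that the basic open D(h) of Spec(A) is disjoint from the union U of all basic opens D(f) for which M[f⁻¹] is a finite free A[f⁻¹]-module (where M is a fixed finitely generated A-module), then h = 0. Consequently U is dense in Spec(A). -/
/-!
Choose s₁, …, sₙ spanning M_g (initially g = 1) and let h ≠ 0 with gh ≠ 0. If every relation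
∑ cᵢ sᵢ = 0 satisfies gh·cᵢ = 0, then the sᵢ become a basis of M_f for f = gh, and fh ≠ 0 because A
is reduced. Otherwise some relation has gh·cⱼ ≠ 0; once cⱼ is inverted as well, sⱼ is redundant,
so we induct on n with g replaced by g·cⱼ. Hence every nonzero D(h) meets the union U of the free
loci D(f), and U is dense since the D(h) form a basis of Spec A.
-/

open LocalizedModule

namespace LocalizedModule

variable {A N M : Type*} [CommRing A] [AddCommGroup N] [Module A N] [AddCommGroup M] [Module A M]
  (S : Submonoid A) {φ : N →ₗ[A] M}

lemma mk_eq_zero_iff {m : M} {s : S} : mk m s = 0 ↔ ∃ u : S, u • m = 0 := by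
  rw [← zero_mk (1 : S), mk_eq]
  simp

lemma map_injective_of_ker (hker : ∀ c, φ c = 0 → ∃ t : S, t • c = 0) :
    Function.Injective (map S φ) := by
  rw [← LinearMap.ker_eq_bot, LinearMap.ker_eq_bot']
  intro z hz
  induction z using induction_on with
  | h c s =>
    obtain ⟨u, hu⟩ := (mk_eq_zero_iff S).mp (by rwa [map_mk] at hz)
    obtain ⟨t, ht⟩ := hker (u • c) (by rw [LinearMap.map_smul_of_tower, hu])
    exact (mk_eq_zero_iff S).mpr ⟨t * u, by rwa [mul_smul]⟩

lemma map_surjective_of_range (hrange : ∀ x, ∃ t : S, t • x ∈ LinearMap.range φ) :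
    Function.Surjective (map S φ) := by
  intro z
  induction z using induction_on with
  | h x s =>
    obtain ⟨t, c, hc⟩ := hrange x
    exact ⟨mk c (t * s), by rw [map_mk, hc, mk_cancel_common_left]⟩

lemma finite_free_of_map_bijective [Module.Finite A N] [Module.Free A N]
    (hφ : Function.Bijective (map S φ)) :
    Module.Finite (Localization S) (LocalizedModule S M) ∧
      Module.Free (Localization S) (LocalizedModule S M) := by
  let e := LinearEquiv.ofBijective (map S φ) hφ
  have := Module.free_of_isLocalizedModule (Rₛ := Localization S) S (mkLinearMap S N)
  exact ⟨Module.Finite.equiv e, Module.Free.of_equiv e⟩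

end LocalizedModule

section DropGenerator

variable {A M : Type*} [CommRing A] [AddCommGroup M] [Module A M]

lemma smul_mem_span_succAbove_of_sum_eq_zero {n : ℕ} {s : Fin (n + 1) → M}
    {c : Fin (n + 1) → A} (hc : ∑ i, c i • s i = 0) (j : Fin (n + 1)) {x : M}
    (hx : x ∈ Submodule.span A (Set.range s)) :
    c j • x ∈ Submodule.span A (Set.range (s ∘ j.succAbove)) := by
  have hsucc (i : Fin n) : s (j.succAbove i) ∈ Submodule.span A (Set.range (s ∘ j.succAbove)) :=
    Submodule.subset_span ⟨i, rfl⟩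
  induction hx using Submodule.span_induction with
  | mem _ hy =>
    obtain ⟨i, rfl⟩ := hy
    obtain rfl | ⟨i, rfl⟩ := Fin.eq_self_or_eq_succAbove j i
    · have hcj : c i • s i = -∑ k, c (i.succAbove k) • s (i.succAbove k) := by
        rw [eq_neg_iff_add_eq_zero, ← Fin.sum_univ_succAbove (fun k => c k • s k) i, hc]
      rw [hcj]
      exact neg_mem (Submodule.sum_mem _ fun k _ => Submodule.smul_mem _ _ (hsucc k))
    · exact Submodule.smul_mem _ _ (hsucc i)
  | zero => simp
  | add _ _ _ _ hx hy => simpa only [smul_add] using add_mem hx hy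
  | smul a _ _ hx => simpa only [smul_comm (c j) a] using Submodule.smul_mem _ a hx

end DropGenerator

lemma PrimeSpectrum.basicOpen_nonempty_iff_ne_zero {R : Type*} [CommRing R] [IsReduced R] {f : R} :
    (basicOpen f : Set (PrimeSpectrum R)).Nonempty ↔ f ≠ 0 := by
  rw [Set.nonempty_iff_ne_empty, Ne, TopologicalSpace.Opens.coe_eq_empty, basicOpen_eq_bot_iff,
    isNilpotent_iff_eq_zero]

section FreeAway

variable {A : Type*} [CommRing A] (M : Type*) [AddCommGroup M] [Module A M]

def FiniteFreeAway (f : A) : Prop :=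
  Module.Finite (Localization.Away f) (LocalizedModule (Submonoid.powers f) M) ∧
    Module.Free (Localization.Away f) (LocalizedModule (Submonoid.powers f) M)

variable {M}

lemma finiteFreeAway_of_span_of_ker {ι : Type*} [Fintype ι] {f : A} {s : ι → M}
    (hspan : ∀ x : M, ∃ k : ℕ, f ^ k • x ∈ Submodule.span A (Set.range s))
    (hker : ∀ c, Fintype.linearCombination A s c = 0 → ∃ k : ℕ, f ^ k • c = 0) :
    FiniteFreeAway M f := by
  refine finite_free_of_map_bijective _ (φ := Fintype.linearCombination A s)
    ⟨map_injective_of_ker _ fun c hc => ?_, map_surjective_of_range _ fun x => ?_⟩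
  · obtain ⟨k, hk⟩ := hker c hc
    exact ⟨⟨f ^ k, k, rfl⟩, hk⟩
  · obtain ⟨k, hk⟩ := hspan x
    exact ⟨⟨f ^ k, k, rfl⟩, by rwa [Fintype.range_linearCombination]⟩

variable [IsReduced A]

lemma exists_finiteFreeAway_of_ker_smul_eq_zero {ι : Type*} [Fintype ι] {s : ι → M} {g h : A}
    (hgh : g * h ≠ 0) (hspan : ∀ x : M, ∃ k : ℕ, g ^ k • x ∈ Submodule.span A (Set.range s))
    (hker : ∀ c, Fintype.linearCombination A s c = 0 → (g * h) • c = 0) :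
    ∃ f : A, f * h ≠ 0 ∧ FiniteFreeAway M f := by
  refine ⟨g * h, fun hghh => hgh ?_, finiteFreeAway_of_span_of_ker (fun x => ?_)
    fun c hc => ⟨1, by rw [pow_one, hker c hc]⟩⟩
  · exact IsReduced.eq_zero _ ⟨2, by linear_combination g * hghh⟩
  · obtain ⟨k, hk⟩ := hspan x
    refine ⟨k, ?_⟩
    rw [mul_pow, mul_comm, mul_smul]
    exact Submodule.smul_mem _ _ hk

theorem exists_finiteFreeAway_of_span_away {n : ℕ} (s : Fin n → M) {g h : A} (hgh : g * h ≠ 0)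
    (hspan : ∀ x : M, ∃ k : ℕ, g ^ k • x ∈ Submodule.span A (Set.range s)) :
    ∃ f : A, f * h ≠ 0 ∧ FiniteFreeAway M f := by
  induction n generalizing g with
  | zero =>
    exact exists_finiteFreeAway_of_ker_smul_eq_zero hgh hspan fun _ _ => Subsingleton.elim _ _
  | succ n ih =>
    by_cases hker : ∀ c, Fintype.linearCombination A s c = 0 → (g * h) • c = 0
    · exact exists_finiteFreeAway_of_ker_smul_eq_zero hgh hspan hker
    push Not at hker
    obtain ⟨c, hc, hne⟩ := hker
    obtain ⟨j, hj⟩ : ∃ j, g * h * c j ≠ 0 := by simpa [funext_iff] using hne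
    refine ih (s ∘ j.succAbove) (g := g * c j) (by rwa [mul_right_comm]) fun x => ?_
    obtain ⟨k, hk⟩ := hspan x
    have hc' : ∑ i, c i • s i = 0 := by simpa [Fintype.linearCombination_apply] using hc
    refine ⟨k + 1, ?_⟩
    rw [show (g * c j) ^ (k + 1) • x = (g * c j ^ k) • c j • g ^ k • x by
      rw [smul_smul, smul_smul]; congr 1; ring]
    exact Submodule.smul_mem _ _ (smul_mem_span_succAbove_of_sum_eq_zero hc' j hk)

variable (M) in
theorem exists_finiteFreeAway_mul_ne_zero [Module.Finite A M] {h : A} (hh : h ≠ 0) :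
    ∃ f : A, f * h ≠ 0 ∧ FiniteFreeAway M f := by
  obtain ⟨n, s, hs⟩ := Module.Finite.exists_fin (R := A) (M := M)
  exact exists_finiteFreeAway_of_span_away s (g := 1) (by rwa [one_mul]) fun x =>
    ⟨0, by simp [hs]⟩

end FreeAway

theorem dense_union_of_free_loci (A : Type*) [CommRing A] [IsReduced A]
    (M : Type*) [AddCommGroup M] [Module A M] [Module.Finite A M] :
    (∀ h : A,
      Disjoint (PrimeSpectrum.basicOpen h : Set (PrimeSpectrum A))
        (⋃ f ∈ {f : A |
            Module.Finite (Localization.Away f) (LocalizedModule (Submonoid.powers f) M) ∧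
            Module.Free (Localization.Away f) (LocalizedModule (Submonoid.powers f) M)},
          (PrimeSpectrum.basicOpen f : Set (PrimeSpectrum A))) →
      h = 0) ∧
    Dense (⋃ f ∈ {f : A |
        Module.Finite (Localization.Away f) (LocalizedModule (Submonoid.powers f) M) ∧
        Module.Free (Localization.Away f) (LocalizedModule (Submonoid.powers f) M)},
      (PrimeSpectrum.basicOpen f : Set (PrimeSpectrum A))) := by
  set U := ⋃ f ∈ {f : A | FiniteFreeAway M f}, (PrimeSpectrum.basicOpen f : Set (PrimeSpectrum A))
  have hmeets (h : A) (hh : h ≠ 0) :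
      ((PrimeSpectrum.basicOpen h : Set (PrimeSpectrum A)) ∩ U).Nonempty := by
    obtain ⟨f, hfh, hf⟩ := exists_finiteFreeAway_mul_ne_zero M hh
    obtain ⟨p, hp⟩ := PrimeSpectrum.basicOpen_nonempty_iff_ne_zero.mpr hfh
    obtain ⟨hpf, hph⟩ : p ∈ PrimeSpectrum.basicOpen f ⊓ PrimeSpectrum.basicOpen h := by
      rwa [← PrimeSpectrum.basicOpen_mul]
    exact ⟨p, hph, Set.mem_biUnion hf hpf⟩
  refine ⟨fun h hdisj => by_contra fun hh => (hmeets h hh).not_disjoint hdisj,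
    PrimeSpectrum.isTopologicalBasis_basic_opens.dense_iff.mpr ?_⟩
  rintro _ ⟨h, rfl⟩ hne
  exact hmeets h (PrimeSpectrum.basicOpen_nonempty_iff_ne_zero.mp hne)
end

section
/- Let A be a commutative ring, B an A-algebra generated by x₁,...,xₙ, and M a B-module generated by v₁,...,vₘ. Suppose a subfamily (w_J)_{J ∈ J'} of the monomial family (x₁^{i₁}···xₙ^{iₙ} v_ℓ) is: (i) downward closed in exponents (if (ℓ,i) ∉ J' and k ≥ i componentwise then (ℓ,k) ∉ J'), (ii) spanning in the sense that every w_J with J ∈ J is an A-linear combination of {w_{J'} : J' ∈ J', J' ⪯ J} in the lexicographic order, and (iii) A-linearly independent. Then M is finitely presented as a B-module, with relations given by expressing each 'corner' element of the complement of J' in terms of smaller elements. -/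
/-!
Let `π : B^m → M` send `e_ℓ` to `v_ℓ` and put `μ (ℓ, i) = x^i e_ℓ`, so that `π ∘ μ = w`.
By (ii), each corner `c` of the complement of `J'` satisfies `μ c ≡ ∑ a_q μ q (mod ker π)` with
`q ∈ J'` and `q ≺ c`; by Dickson's lemma there are finitely many corners, so these relations
generate a finitely generated `K ≤ ker π`. Every index outside `J'` is a corner shifted by an
exponent `d`, multiplication by `x^d` preserves `≺`, and `≺` is a well-order, so induction gives
`B^m = K + span_A (μ '' J')`. By (iii), `π` is injective on `span_A (μ '' J')`, hence `ker π = K`.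
-/

open Submodule

theorem eq_of_le_of_le_sup_of_disjoint {α : Type*} [Lattice α] [OrderBot α]
    [IsModularLattice α] {a b c : α} (hab : a ≤ b) (hb : b ≤ a ⊔ c) (hd : Disjoint c b) : b = a :=
  calc b = (a ⊔ c) ⊓ b := (inf_eq_right.mpr hb).symm
    _ = a := by rw [sup_inf_assoc_of_le c hab, hd.eq_bot, sup_bot_eq]

theorem LinearMap.mem_ker_sup_span_of_apply_mem_span_image {R F M : Type*} [Ring R]
    [AddCommGroup F] [Module R F] [AddCommGroup M] [Module R M] (π : F →ₗ[R] M) {s : Set F}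
    {y : F} (hy : π y ∈ span R (π '' s)) : y ∈ LinearMap.ker π ⊔ span R s := by
  rwa [sup_comm, ← comap_map_eq, map_span]

theorem LinearMap.ker_eq_of_le_sup_span_of_linearIndependent {A B F M ι : Type*} [Ring A]
    [Ring B] [SMul A B] [AddCommGroup F] [Module A F] [Module B F] [IsScalarTower A B F]
    [AddCommGroup M] [Module A M] [Module B M] [IsScalarTower A B M] (π : F →ₗ[B] M)
    {K : Submodule B F} (hK : K ≤ LinearMap.ker π) {μ : ι → F} {S : Set ι}
    (hspan : K.restrictScalars A ⊔ span A (μ '' S) = ⊤)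
    (hind : LinearIndependent A fun q : S => π (μ q)) : LinearMap.ker π = K := by
  have hdisj : Disjoint (span A (μ '' S)) ((LinearMap.ker π).restrictScalars A) := by
    rw [Set.image_eq_range, ← LinearMap.ker_restrictScalars]
    exact range_ker_disjoint (f := π.restrictScalars A) hind
  exact Submodule.restrictScalars_injective A _ _ <| eq_of_le_of_le_sup_of_disjoint
    ((Submodule.restrictScalars_le A).mpr hK) (hspan ▸ le_top) hdisj

theorem Submodule.exists_fg_le_forall_mem_sup {R S F ι : Type*} [Semiring R] [Semiring S]
    [SMul R S] [AddCommMonoid F] [Module R F] [Module S F] [IsScalarTower R S F]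
    (N : Submodule S F) {s : Set ι} (hs : s.Finite) (f : ι → F) (T : ι → Submodule R F)
    (h : ∀ c ∈ s, f c ∈ N.restrictScalars R ⊔ T c) :
    ∃ K : Submodule S F, K.FG ∧ K ≤ N ∧ ∀ c ∈ s, f c ∈ K.restrictScalars R ⊔ T c := by
  choose k hkN t ht hkt using fun c : s => mem_sup.mp (h c c.2)
  have := hs.to_subtype
  refine ⟨span S (Set.range k), fg_span (Set.finite_range k),
    span_le.mpr (Set.range_subset_iff.mpr hkN), fun c hc => ?_⟩
  rw [← hkt ⟨c, hc⟩]
  exact add_mem_sup (subset_span ⟨⟨c, hc⟩, rfl⟩) (ht ⟨c, hc⟩)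

theorem Algebra.span_range_prod_pow_eq_top {R S σ : Type*} [CommSemiring R] [CommSemiring S]
    [Algebra R S] [Fintype σ] {x : σ → S} (hx : Algebra.adjoin R (Set.range x) = ⊤) :
    span R (Set.range fun i : σ → ℕ => ∏ j, x j ^ i j) = ⊤ := by
  have hclosure : (Submonoid.closure (Set.range x) : Set S) =
      Set.range fun i : σ → ℕ => ∏ j, x j ^ i j := by
    ext y
    simp [Submonoid.mem_closure_range_iff_of_fintype, eq_comm]
  rw [← hclosure, ← Algebra.adjoin_eq_span, hx, Algebra.top_toSubmodule]

theorem Submodule.span_iUnion_image_single_eq_top {R S η : Type*} [Semiring R]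
    [AddCommMonoid S] [Module R S] [Finite η] [DecidableEq η] {s : Set S}
    (hs : span R s = ⊤) : span R (⋃ ℓ : η, Pi.single ℓ '' s) = ⊤ := by
  simp_rw [span_iUnion, ← LinearMap.coe_single R (fun _ : η => S), ← map_span, hs, map_top]
  exact LinearMap.iSup_range_single R _

section Corners

variable {ι σ : Type*}

def lexKey (p : ι × (σ → ℕ)) : ι ×ₗ Lex (σ → ℕ) := toLex (p.1, toLex p.2)

theorem lexKey_injective : Function.Injective (lexKey : ι × (σ → ℕ) → ι ×ₗ Lex (σ → ℕ)) :=
  fun p q h => by simpa [lexKey, Prod.ext_iff] using h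

theorem lexKey_add_lt_add [LinearOrder ι] [LinearOrder σ] {p q : ι × (σ → ℕ)} (d : σ → ℕ)
    (h : lexKey q < lexKey p) : lexKey (q.1, q.2 + d) < lexKey (p.1, p.2 + d) := by
  simp only [lexKey, Prod.Lex.lt_iff, ofLex_toLex] at h ⊢
  exact h.imp_right fun ⟨h1, h2⟩ => ⟨h1, add_lt_add_left h2 (toLex d)⟩

theorem setOf_mem_lexKey_le_eq_lt [LinearOrder ι] [LinearOrder σ] {J' : Set (ι × (σ → ℕ))}
    {c : ι × (σ → ℕ)} (hc : c ∉ J') :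
    {q ∈ J' | lexKey q ≤ lexKey c} = {q ∈ J' | lexKey q < lexKey c} := by
  ext q
  refine and_congr_right fun hq => le_iff_lt_or_eq.trans (or_iff_left ?_)
  exact fun h => hc (lexKey_injective h ▸ hq)

def corners (J' : Set (ι × (σ → ℕ))) : Set (ι × (σ → ℕ)) :=
  {c | Minimal (fun i => (c.1, i) ∉ J') c.2}

theorem finite_corners [Finite ι] [Finite σ] (J' : Set (ι × (σ → ℕ))) : (corners J').Finite := by
  have hunion : corners J' = ⋃ ℓ, Prod.mk ℓ '' {i | Minimal (fun i => (ℓ, i) ∉ J') i} := by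
    ext ⟨ℓ, i⟩
    simp [corners]
  rw [hunion]
  exact Set.finite_iUnion fun ℓ =>
    (WellQuasiOrderedLE.finite_of_isAntichain (setOfPred_minimal_antichain _)).image _

theorem exists_corner_of_notMem [Finite σ] {J' : Set (ι × (σ → ℕ))} {p : ι × (σ → ℕ)}
    (hp : p ∉ J') : ∃ c ∈ corners J', ∃ d, p = (c.1, c.2 + d) := by
  obtain ⟨i, hi, hmin⟩ := exists_minimal_le_of_wellFoundedLT (fun i => (p.1, i) ∉ J') p.2 hp
  obtain ⟨d, hd⟩ := exists_add_of_le hi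
  exact ⟨(p.1, i), hmin, d, by rw [← hd]⟩

theorem mem_sup_span_of_forall_corners {A B F : Type*} [LinearOrder ι] [WellFoundedLT ι]
    [Finite σ] [LinearOrder σ] [CommSemiring A] [CommSemiring B] [Algebra A B]
    [AddCommMonoid F] [Module A F] [Module B F] [IsScalarTower A B F]
    (b : (σ → ℕ) → B) (μ : ι × (σ → ℕ) → F) (hμ : ∀ ℓ i d, μ (ℓ, i + d) = b d • μ (ℓ, i))
    (J' : Set (ι × (σ → ℕ))) (K : Submodule B F)
    (hK : ∀ c ∈ corners J',
      μ c ∈ K.restrictScalars A ⊔ span A (μ '' {q ∈ J' | lexKey q < lexKey c}))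
    (p : ι × (σ → ℕ)) :
    μ p ∈ K.restrictScalars A ⊔ span A (μ '' {q ∈ J' | lexKey q ≤ lexKey p}) := by
  have hwf := InvImage.wf lexKey (wellFounded_lt (α := ι ×ₗ Lex (σ → ℕ)))
  induction p using hwf.induction with | _ p ih =>
  by_cases hp : p ∈ J'
  · exact mem_sup_right (subset_span ⟨p, ⟨hp, le_rfl⟩, rfl⟩)
  obtain ⟨c, hc, d, rfl⟩ := exists_corner_of_notMem hp
  let shift : F →ₗ[A] F := (LinearMap.lsmul B F (b d)).restrictScalars A
  have hshift : ∀ q : ι × (σ → ℕ), shift (μ q) = μ (q.1, q.2 + d) := fun q => (hμ _ _ _).symm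
  have hmem := mem_map_of_mem (f := shift) (hK c hc)
  rw [hshift, Submodule.map_sup, map_span, ← Set.image_comp] at hmem
  refine SetLike.le_def.mp (sup_le ?_ (span_le.mpr ?_)) hmem
  · rintro _ ⟨k, hk, rfl⟩
    exact mem_sup_left (K.smul_mem (b d) hk)
  · rintro _ ⟨q, ⟨-, hqc⟩, rfl⟩
    rw [Function.comp_apply, hshift]
    have hlt := lexKey_add_lt_add d hqc
    have hsub : {r ∈ J' | lexKey r ≤ lexKey (q.1, q.2 + d)} ⊆
        {r ∈ J' | lexKey r ≤ lexKey (c.1, c.2 + d)} := fun r hr => ⟨hr.1, hr.2.trans hlt.le⟩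
    exact sup_le_sup_left (span_mono (Set.image_mono hsub)) (K.restrictScalars A) (ih _ hlt)

end Corners

theorem finitePresentation_of_good_generating_family_general (A : Type*) [CommRing A]
    (B : Type*) [CommRing B] [Algebra A B]
    (M : Type*) [AddCommGroup M] [Module A M] [Module B M] [IsScalarTower A B M]
    (n m : ℕ) (x : Fin n → B) (hx : Algebra.adjoin A (Set.range x) = ⊤)
    (v : Fin m → M) (hv : Submodule.span B (Set.range v) = ⊤)
    (J' : Set (Fin m × (Fin n → ℕ)))
    (w : Fin m × (Fin n → ℕ) → M)
    (hw : ∀ p : Fin m × (Fin n → ℕ), w p = (∏ j, x j ^ p.2 j) • v p.1)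
    -- (ii) every member of the full family is an A-linear combination of
    -- members of the subfamily of lexicographically smaller or equal index
    (hspan : ∀ p : Fin m × (Fin n → ℕ),
      w p ∈ Submodule.span A (w '' {q ∈ J' |
        (toLex (q.1, toLex q.2) : Fin m ×ₗ Lex (Fin n → ℕ)) ≤ toLex (p.1, toLex p.2)}))
    -- (iii) the subfamily is A-linearly independent
    (hind : LinearIndependent A (fun q : J' => w q.1)) :
    Module.FinitePresentation B M := by
  let π := Fintype.linearCombination B v
  have hπ : Function.Surjective π := by
    rw [← LinearMap.range_eq_top, Fintype.range_linearCombination, hv]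
  let μ : Fin m × (Fin n → ℕ) → Fin m → B := fun p => Pi.single p.1 (∏ j, x j ^ p.2 j)
  have hπμ : ∀ p, π (μ p) = w p := fun p => by
    simp [π, μ, hw, Fintype.linearCombination_apply_single]
  have hμ : ∀ ℓ i d, μ (ℓ, i + d) = (∏ j, x j ^ d j) • μ (ℓ, i) := fun ℓ i d => by
    simp [μ, pow_add, Finset.prod_mul_distrib, ← Pi.single_smul, mul_comm]
  have hcorner : ∀ c ∈ corners J', μ c ∈ (LinearMap.ker π).restrictScalars A ⊔
      span A (μ '' {q ∈ J' | lexKey q < lexKey c}) := fun c hc => by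
    rw [← LinearMap.ker_restrictScalars]
    refine LinearMap.mem_ker_sup_span_of_apply_mem_span_image _ ?_
    rw [LinearMap.coe_restrictScalars, hπμ, Set.image_image, funext hπμ,
      ← setOf_mem_lexKey_le_eq_lt hc.1]
    exact hspan c
  obtain ⟨K, hKfg, hKker, hK⟩ := exists_fg_le_forall_mem_sup _ (finite_corners J') μ _ hcorner
  have hμK : K.restrictScalars A ⊔ span A (μ '' J') = ⊤ := by
    rw [eq_top_iff, ← span_iUnion_image_single_eq_top (Algebra.span_range_prod_pow_eq_top hx),
      span_le]
    simp only [Set.iUnion_subset_iff, Set.image_subset_iff, Set.range_subset_iff]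
    intro ℓ i
    have hsub : {q ∈ J' | lexKey q ≤ lexKey (ℓ, i)} ⊆ J' := fun q hq => hq.1
    exact sup_le_sup_left (span_mono (Set.image_mono hsub)) (K.restrictScalars A)
      (mem_sup_span_of_forall_corners _ μ hμ J' K hK (ℓ, i))
  have hker : LinearMap.ker π = K :=
    π.ker_eq_of_le_sup_span_of_linearIndependent hKker hμK (by simpa only [hπμ] using hind)
  exact Module.finitePresentation_of_surjective π hπ (hker ▸ hKfg)

theorem finitePresentation_of_good_generating_family (A : Type*) [CommRing A]
    (B : Type*) [CommRing B] [Algebra A B]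
    (M : Type*) [AddCommGroup M] [Module A M] [Module B M] [IsScalarTower A B M]
    (n m : ℕ) (x : Fin n → B) (hx : Algebra.adjoin A (Set.range x) = ⊤)
    (v : Fin m → M) (hv : Submodule.span B (Set.range v) = ⊤)
    (J' : Set (Fin m × (Fin n → ℕ)))
    (w : Fin m × (Fin n → ℕ) → M)
    (hw : ∀ p : Fin m × (Fin n → ℕ), w p = (∏ j, x j ^ p.2 j) • v p.1)
    -- (i) the complement is upward closed in the exponents
    (hdown : ∀ (ℓ : Fin m) (i k : Fin n → ℕ), (ℓ, i) ∉ J' → i ≤ k → (ℓ, k) ∉ J')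
    -- (ii) every member of the full family is an A-linear combination of
    -- members of the subfamily of lexicographically smaller or equal index
    (hspan : ∀ p : Fin m × (Fin n → ℕ),
      w p ∈ Submodule.span A (w '' {q ∈ J' |
        (toLex (q.1, toLex q.2) : Fin m ×ₗ Lex (Fin n → ℕ)) ≤ toLex (p.1, toLex p.2)}))
    -- (iii) the subfamily is A-linearly independent
    (hind : LinearIndependent A (fun q : J' => w q.1)) :
    Module.FinitePresentation B M :=
  finitePresentation_of_good_generating_family_general A B M n m x hx v hv J' w hw hspan hind
end

section
/- Let A be a reduced commutative ring, let M be an A-module, and let (w_J)_{J∈J'} be a finite or well-ordered family in M. Suppose that for every J ∈ J' and every a ∈ A, if the image of w_J in M[a⁻¹] lies in the A[a⁻¹]-span of {w_{J'} : J' ∈ J', J' ≺ J}, then a = 0 (by an inductive triviality argument). Then the family (w_J) is A-linearly independent. -/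
/-!
Take a nontrivial relation `∑ l_i w_i = 0` and let `J` be the largest index in its support. Then
`l_J • w_J` lies in the span of the earlier `w_i`; after inverting `a = l_J` the scalar `a` becomes
a unit, so the image of `w_J` in `M[a⁻¹]` lies in the span of the images of the earlier `w_i`, and
the hypothesis forces `l_J = 0`, a contradiction.
-/

theorem LocalizedModule.mkLinearMap_mem_span_image_of_smul_mem_span {A M : Type*} [CommRing A]
    [AddCommGroup M] [Module A M] {a : A} {x : M} {s : Set M}
    (hx : a • x ∈ Submodule.span A s) :
    mkLinearMap (Submonoid.powers a) M x ∈
      Submodule.span (Localization.Away a) (mkLinearMap (Submonoid.powers a) M '' s) := by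
  set f := mkLinearMap (Submonoid.powers a) M
  have hfax : f (a • x) ∈ Submodule.span A (f '' s) := by
    rw [← Submodule.map_span]
    exact Submodule.mem_map_of_mem hx
  have hunit : IsUnit (algebraMap A (Localization.Away a) a) :=
    IsLocalization.Away.algebraMap_isUnit a
  rw [← Submodule.smul_mem_iff_of_isUnit _ hunit, algebraMap_smul, ← map_smul]
  exact Submodule.span_le_restrictScalars A (Localization.Away a) _ hfax

theorem Finsupp.apply_smul_mem_span_image_Iio_of_linearCombination_eq_zero {ι R M : Type*}
    [LinearOrder ι] [Ring R] [AddCommGroup M] [Module R M] {w : ι → M} {l : ι →₀ R}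
    (hl : linearCombination R w l = 0) {J : ι} (hJ : ∀ i ∈ l.support, i ≤ J) :
    l J • w J ∈ Submodule.span R (w '' Set.Iio J) := by
  rw [Finsupp.mem_span_image_iff_linearCombination]
  refine ⟨-l.erase J, fun i hi ↦ ?_, ?_⟩
  · rw [Finset.mem_coe, Finsupp.support_neg, Finsupp.support_erase, Finset.mem_erase] at hi
    exact lt_of_le_of_ne (hJ i hi.2) hi.1
  · have hsplit := congrArg (linearCombination R w) (Finsupp.single_add_erase J l)
    rw [map_add, Finsupp.linearCombination_single, hl] at hsplit
    rw [map_neg]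
    exact neg_eq_of_add_eq_zero_left hsplit

theorem linearIndependent_of_localized_span_condition_general (A : Type*) [CommRing A]
    (M : Type*) [AddCommGroup M] [Module A M]
    (ι : Type*) [LinearOrder ι] (w : ι → M)
    (h : ∀ (J : ι) (a : A),
      LocalizedModule.mkLinearMap (Submonoid.powers a) M (w J) ∈
        Submodule.span (Localization.Away a)
          ((LocalizedModule.mkLinearMap (Submonoid.powers a) M) '' (w '' {J' | J' < J})) →
      a = 0) :
    LinearIndependent A w := by
  rw [linearIndependent_iff]
  intro l hl
  by_contra hne
  have hsupp : l.support.Nonempty := Finsupp.support_nonempty_iff.mpr hne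
  set J := l.support.max' hsupp
  have hJ_top : l J • w J ∈ Submodule.span A (w '' Set.Iio J) :=
    Finsupp.apply_smul_mem_span_image_Iio_of_linearCombination_eq_zero hl
      fun i hi ↦ l.support.le_max' i hi
  exact Finsupp.mem_support_iff.mp (l.support.max'_mem hsupp)
    (h J (l J) (LocalizedModule.mkLinearMap_mem_span_image_of_smul_mem_span hJ_top))

theorem linearIndependent_of_localized_span_condition (A : Type*) [CommRing A] [IsReduced A]
    (M : Type*) [AddCommGroup M] [Module A M]
    (ι : Type*) [LinearOrder ι] [WellFoundedLT ι] (w : ι → M)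
    (h : ∀ (J : ι) (a : A),
      LocalizedModule.mkLinearMap (Submonoid.powers a) M (w J) ∈
        Submodule.span (Localization.Away a)
          ((LocalizedModule.mkLinearMap (Submonoid.powers a) M) '' (w '' {J' | J' < J})) →
      a = 0) :
    LinearIndependent A w :=
  linearIndependent_of_localized_span_condition_general A M ι w h
end

section
/- Let A be a commutative ring, B an A-algebra of finite type with generators x₁,...,xₙ, and suppose B is free as an A-module with a basis given by a 'good' family of monomials (x₁^{i₁}···xₙ^{iₙ})_{(i₁,...,iₙ)∈I'} (downward closed in exponents, with each excluded monomial expressible as an A-combination of basis monomials of smaller lexicographic index). Then B is of finite presentation as an A-algebra: B ≅ A[X₁,...,Xₙ]/I where I is generated by one relation for each corner of the complement of I'. -/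
/-!
Let `s` be the set of exponents of the basis monomials and, for each corner `c` (a minimal
exponent outside `s`), let `X^c - r_c` be the relation expressing `x^c` through basis monomials of
lexicographically smaller exponent. These relations are monic for the lexicographic monomial
order, with leading monomial `X^c`, so dividing a polynomial `p` in the kernel of
`X ↦ x` by them leaves a remainder that no corner divides, i.e. one supported in `s`. That
remainder still lies in the kernel, so it vanishes by linear independence of the basis monomials;
hence the kernel is generated by the relations, of which there are finitely many by Dickson's
lemma.
-/

open MvPolynomial
open scoped MonomialOrder

namespace MvPolynomial

variable {σ R S : Type*} [CommRing R] [CommRing S] [Algebra R S]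

theorem aeval_eq_sum_coeff_smul (x : σ → S) (p : MvPolynomial σ R) :
    aeval x p = ∑ d ∈ p.support, coeff d p • aeval x (monomial d (1 : R)) := by
  conv_lhs => rw [p.as_sum, map_sum]
  refine Finset.sum_congr rfl fun d _ => ?_
  rw [← map_smul, smul_monomial, smul_eq_mul, mul_one]

theorem aeval_monomial_one_eq_prod [Fintype σ] (x : σ → S) (d : σ →₀ ℕ) :
    aeval x (monomial d (1 : R)) = ∏ j, x j ^ d j := by
  rw [aeval_monomial, map_one, one_mul, Finsupp.prod_pow]

theorem eq_zero_of_aeval_eq_zero {x : σ → S} {s : Set (σ →₀ ℕ)}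
    (hs : LinearIndepOn R (fun d => aeval x (monomial d (1 : R))) s) {p : MvPolynomial σ R}
    (hp : p ∈ restrictSupport R s) (h : aeval x p = 0) : p = 0 := by
  ext d
  by_cases hd : d ∈ p.support
  · exact linearIndepOn_iff'.1 hs p.support (coeff · p) hp (aeval_eq_sum_coeff_smul x p ▸ h) d hd
  · exact notMem_support_iff.1 hd

def corners (s : Set (σ →₀ ℕ)) : Set (σ →₀ ℕ) := {d | Minimal (· ∉ s) d}

theorem corners_finite [Finite σ] (s : Set (σ →₀ ℕ)) : (corners s).Finite :=
  (setOfPred_minimal_antichain _).finite_of_partiallyWellOrderedOn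
    (Set.isPWO_of_wellQuasiOrderedLE _)

theorem exists_corner_le {s : Set (σ →₀ ℕ)} {d : σ →₀ ℕ} (hd : d ∉ s) :
    ∃ c ∈ corners s, c ≤ d :=
  let ⟨c, hcd, hc⟩ := exists_minimal_le_of_wellFoundedLT _ d hd
  ⟨c, hc, hcd⟩

theorem exists_support_lex_lt_aeval_eq [Fintype σ] [LinearOrder σ] [WellFoundedGT σ]
    {x : σ → S} {I' : Set (σ → ℕ)} {d : σ →₀ ℕ} (hd : ⇑d ∉ I')
    (h : ∏ j, x j ^ d j ∈ Submodule.span R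
      ((fun i : σ → ℕ => ∏ j, x j ^ i j) '' {i ∈ I' | toLex i ≤ toLex ⇑d})) :
    ∃ q : MvPolynomial σ R, (∀ e ∈ q.support, e ≺[MonomialOrder.lex] d) ∧
      aeval x q = aeval x (monomial d (1 : R)) := by
  set T : Set (σ →₀ ℕ) := {e | ⇑e ∈ I' ∧ toLex ⇑e ≤ toLex ⇑d}
  have hle : Submodule.span R ((fun i : σ → ℕ => ∏ j, x j ^ i j) '' {i ∈ I' | toLex i ≤ toLex ⇑d})
      ≤ (restrictSupport R T).map (aeval x).toLinearMap := by
    refine Submodule.span_le.2 ?_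
    rintro _ ⟨i, hi, rfl⟩
    refine ⟨monomial (Finsupp.equivFunOnFinite.symm i) 1, ?_, aeval_monomial_one_eq_prod x _⟩
    simpa [T] using Or.inl hi
  obtain ⟨q, hqT, hq⟩ := hle h
  refine ⟨q, fun e he => ?_, hq.trans (aeval_monomial_one_eq_prod x d).symm⟩
  obtain ⟨heI, hed⟩ := hqT he
  exact hed.lt_of_ne fun h => hd (DFunLike.coe_injective (toLex.injective h) ▸ heI)

end MvPolynomial

namespace MonomialOrder

variable {σ R : Type*} [CommRing R] (m : MonomialOrder σ) {d : σ →₀ ℕ} {q : MvPolynomial σ R}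

theorem degree_monomial_one_sub [Nontrivial R] (hq : ∀ e ∈ q.support, e ≺[m] d) :
    m.degree (monomial d 1 - q) = d := by
  classical
  by_cases hq0 : q = 0
  · simp [hq0, m.degree_monomial]
  · rw [m.degree_sub_of_lt] <;> simp only [m.degree_monomial, one_ne_zero, if_false]
    exact hq _ (m.degree_mem_support hq0)

theorem monic_monomial_one_sub (hq : ∀ e ∈ q.support, e ≺[m] d) :
    m.Monic (monomial d 1 - q) := by
  classical
  nontriviality R
  by_cases hq0 : q = 0
  · simp [hq0, m.monic_monomial_one]
  · have hlt : m.degree q ≺[m] m.degree (monomial d (1 : R)) := by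
      simpa [m.degree_monomial] using hq _ (m.degree_mem_support hq0)
    exact (m.leadingCoeff_sub_of_lt hlt).trans m.monic_monomial_one

variable {S : Type*} [CommRing S] [Algebra R S] {x : σ → S} {s : Set (σ →₀ ℕ)}

theorem ker_aeval_eq_span_corner_relations
    (hs : LinearIndepOn R (fun d => aeval x (monomial d (1 : R))) s)
    (r : corners s → MvPolynomial σ R) (hr : ∀ c, ∀ e ∈ (r c).support, e ≺[m] c)
    (hrx : ∀ c, aeval x (r c) = aeval x (monomial (c : σ →₀ ℕ) (1 : R))) :
    RingHom.ker (aeval x : MvPolynomial σ R →ₐ[R] S) =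
      Ideal.span (Set.range fun c : corners s => monomial (c : σ →₀ ℕ) 1 - r c) := by
  set b : corners s → MvPolynomial σ R := fun c => monomial (c : σ →₀ ℕ) 1 - r c
  have hspan_le : Ideal.span (Set.range b) ≤ RingHom.ker (aeval x) :=
    Ideal.span_le.2 <| Set.range_subset_iff.2 fun c => by
      simp [b, RingHom.mem_ker, hrx c]
  refine le_antisymm (fun p hp => ?_) hspan_le
  obtain ⟨g, rem, hp_eq, -, hrem⟩ :=
    m.div (b := b) (fun c => (m.monic_monomial_one_sub (hr c)).leadingCoeff_eq_one ▸ isUnit_one) p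
  have hcomb : Finsupp.linearCombination _ b g ∈ Ideal.span (Set.range b) :=
    (Finsupp.range_linearCombination (R := MvPolynomial σ R) (v := b)).le
      (LinearMap.mem_range_self _ g)
  have hrem_mem : rem ∈ restrictSupport R s := fun e he => by
    by_contra hes
    have : Nontrivial R := nontrivial_of_ne _ _ (mem_support_iff.1 he)
    obtain ⟨c, hc, hce⟩ := exists_corner_le hes
    exact hrem e he ⟨c, hc⟩ (m.degree_monomial_one_sub (hr _) ▸ hce)
  have hrem0 : rem = 0 := by
    refine eq_zero_of_aeval_eq_zero hs hrem_mem ?_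
    rw [eq_sub_of_add_eq' hp_eq.symm, map_sub, RingHom.mem_ker.1 hp, hspan_le hcomb, sub_zero]
  rw [hp_eq, hrem0, add_zero]
  exact hcomb

end MonomialOrder

theorem algebra_finitePresentation_of_good_monomial_basis_general (A : Type*) [CommRing A]
    (B : Type*) [CommRing B] [Algebra A B]
    (n : ℕ) (x : Fin n → B) (hx : Algebra.adjoin A (Set.range x) = ⊤)
    (I' : Set (Fin n → ℕ))
    -- every monomial is an A-linear combination of basis monomials of
    -- smaller-or-equal lexicographic index
    (hspan : ∀ i : Fin n → ℕ,
      (∏ j, x j ^ i j) ∈ Submodule.span A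
        ((fun i' : Fin n → ℕ => ∏ j, x j ^ i' j) ''
          {i' ∈ I' | (toLex i' : Lex (Fin n → ℕ)) ≤ toLex i}))
    -- the monomials indexed by I' are A-linearly independent (so they form a basis of B)
    (hind : LinearIndependent A (fun i : I' => ∏ j, x j ^ (i : Fin n → ℕ) j)) :
    Algebra.FinitePresentation A B := by
  set s : Set (Fin n →₀ ℕ) := {d | ⇑d ∈ I'}
  have hs : LinearIndepOn A (fun d => aeval x (monomial d (1 : A))) s := by
    have hI' : LinearIndepOn A (fun i : Fin n → ℕ => ∏ j, x j ^ i j) I' := hind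
    simp only [aeval_monomial_one_eq_prod]
    exact (hI'.mono (Set.image_preimage_subset (⇑· : (Fin n →₀ ℕ) → Fin n → ℕ) I')).comp_of_image
      DFunLike.coe_injective.injOn
  choose r hr hrx using fun c : corners s => exists_support_lex_lt_aeval_eq c.2.1 (hspan c)
  have hsurj : Function.Surjective (aeval x : MvPolynomial (Fin n) A →ₐ[A] B) := by
    rw [← AlgHom.range_eq_top, ← Algebra.adjoin_range_eq_range_aeval, hx]
  have : Finite (corners s) := (corners_finite s).to_subtype
  refine Algebra.FinitePresentation.of_surjective hsurj ?_
  change (RingHom.ker (aeval x)).FG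
  rw [MonomialOrder.lex.ker_aeval_eq_span_corner_relations hs r hr hrx]
  exact Submodule.fg_span (Set.finite_range _)

theorem algebra_finitePresentation_of_good_monomial_basis (A : Type*) [CommRing A]
    (B : Type*) [CommRing B] [Algebra A B]
    (n : ℕ) (x : Fin n → B) (hx : Algebra.adjoin A (Set.range x) = ⊤)
    (I' : Set (Fin n → ℕ))
    -- the complement of I' is upward closed, i.e. I' is downward closed
    (hdown : ∀ i k : Fin n → ℕ, i ∉ I' → i ≤ k → k ∉ I')
    -- every monomial is an A-linear combination of basis monomials of
    -- smaller-or-equal lexicographic index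
    (hspan : ∀ i : Fin n → ℕ,
      (∏ j, x j ^ i j) ∈ Submodule.span A
        ((fun i' : Fin n → ℕ => ∏ j, x j ^ i' j) ''
          {i' ∈ I' | (toLex i' : Lex (Fin n → ℕ)) ≤ toLex i}))
    -- the monomials indexed by I' are A-linearly independent (so they form a basis of B)
    (hind : LinearIndependent A (fun i : I' => ∏ j, x j ^ (i : Fin n → ℕ) j)) :
    Algebra.FinitePresentation A B :=
  algebra_finitePresentation_of_good_monomial_basis_general A B n x hx I' hspan hind
end

section
/- The spectrum Spec(A) of a commutative ring A, as a ringed space with its structure sheaf, satisfies the condition 'for every local section s of the structure sheaf, if the only open on which s is invertible is empty, then s = 0' if and only if A is reduced. -/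
/-!
The hypothesis on `s` says exactly that its basic open `X_s`, the largest open on which `s` is
invertible, is empty. Nilpotent sections have empty basic open, and on a reduced scheme a
section with empty basic open vanishes in every stalk, hence vanishes. So the condition
characterises reduced schemes, and `Spec A` is reduced iff `A` is.
-/

open AlgebraicGeometry TopologicalSpace Opposite CategoryTheory

namespace AlgebraicGeometry

theorem RingedSpace.basicOpen_eq_bot_iff_forall_isUnit_res (X : RingedSpace)
    {U : Opens X} (s : X.presheaf.obj (op U)) :
    X.basicOpen s = ⊥ ↔
      ∀ (V : Opens X) (h : V ≤ U), IsUnit (X.presheaf.map (homOfLE h).op s) → V = ⊥ := by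
  refine ⟨fun hs V h hV => ?_, fun H => H _ (X.basicOpen_le s) (X.isUnit_res_basicOpen s)⟩
  rw [← X.basicOpen_of_isUnit hV, X.basicOpen_res, hs, inf_bot_eq]

theorem Scheme.isReduced_iff_forall_eq_zero_of_basicOpen_eq_bot (X : Scheme) :
    IsReduced X ↔ ∀ (U : X.Opens) (s : Γ(X, U)), X.basicOpen s = ⊥ → s = 0 := by
  refine ⟨fun _ _ => eq_zero_of_basicOpen_eq_bot, fun H => ⟨fun U => ⟨fun s hs => ?_⟩⟩⟩
  exact H U s (X.toLocallyRingedSpace.basicOpen_eq_bot_of_isNilpotent U s hs)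

end AlgebraicGeometry

theorem spec_section_condition_iff_reduced (A : Type*) [CommRing A] :
    (∀ (U : Opens (PrimeSpectrum.Top A)) (s : (Spec.structureSheaf A).val.obj (op U)),
      (∀ (V : Opens (PrimeSpectrum.Top A)) (h : V ≤ U),
        IsUnit ((Spec.structureSheaf A).val.map (homOfLE h).op s) → V = ⊥) →
      s = 0) ↔ IsReduced A := by
  rw [← affine_isReduced_iff (CommRingCat.of A),
    Scheme.isReduced_iff_forall_eq_zero_of_basicOpen_eq_bot]
  exact forall₂_congr fun U s => imp_congr_left
    (RingedSpace.basicOpen_eq_bot_iff_forall_isUnit_res (Spec (.of A)).toRingedSpace s).symm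
end
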